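/- (Menas, one direction) Let ω₁ ⊆ W ⊆ W' be sets and X ⊆ [W]^ω. If X is stationary in [W]^ω, then the set {x' ∈ [W']^ω : x' ∩ W ∈ X} is stationary in [W']^ω. -/

import Mathlib

/-!
Given a club `Z ⊆ [W']^ω`, fix a Skolem-type function assigning to every finite sequence
`a₀, …, aₙ₋₁` in `W'` an element of `Z` that contains `aₙ₋₁` and the set assigned to
`a₀, …, aₙ₋₂`. The countable `x ⊆ W` such that `z ∩ W ⊆ x` for every `z` assigned to a
sequence from `x` form a club in `[W]^ω`, so one of them lies in `X`. Enumerating that `x`, the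
sets assigned to its initial segments form an increasing chain in `Z`, whose union `z'` lies in
`Z` and satisfies `z' ∩ W = x`.
-/

open Set Cardinal

noncomputable def omega1 : Ordinal := (Cardinal.aleph 1).ord

noncomputable def omega2 : Ordinal := (Cardinal.aleph 2).ord

/-- `[W]^ω`: the countable subsets of `W`. -/
def ctble (W : Set Ordinal) : Set (Set Ordinal) := {x | x ⊆ W ∧ x.Countable}

/-- `Z` is club in `[W]^ω`: `Z ⊆ [W]^ω`, `Z` is `⊆`-cofinal in `[W]^ω`, and `Z` is closed
under unions of `⊆`-increasing `ω`-chains of its elements. -/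
def IsClubW (W : Set Ordinal) (Z : Set (Set Ordinal)) : Prop :=
  Z ⊆ ctble W ∧
  (∀ x ∈ ctble W, ∃ z ∈ Z, x ⊆ z) ∧
  (∀ c : ℕ → Set Ordinal, (∀ n, c n ∈ Z) → (∀ n, c n ⊆ c (n + 1)) → (⋃ n, c n) ∈ Z)

/-- `X` is stationary in `[W]^ω`: `X` meets every club subset of `[W]^ω`. -/
def IsStat (W : Set Ordinal) (X : Set (Set Ordinal)) : Prop :=
  ∀ Z, IsClubW W Z → (X ∩ Z).Nonempty

/-- `X` is non-stationary in `[W]^ω`: `X` is disjoint from some club subset of `[W]^ω`. -/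
def NonStat (W : Set Ordinal) (X : Set (Set Ordinal)) : Prop :=
  ∃ Z, IsClubW W Z ∧ X ∩ Z = ∅

lemma insert_mem_ctble {W s : Set Ordinal} {a : Ordinal} (ha : a ∈ W) (hs : s ∈ ctble W) :
    insert a s ∈ ctble W :=
  ⟨insert_subset ha hs.1, hs.2.insert a⟩

lemma iUnion_mem_ctble {W : Set Ordinal} {c : ℕ → Set Ordinal} (hc : ∀ n, c n ∈ ctble W) :
    ⋃ n, c n ∈ ctble W :=
  ⟨iUnion_subset fun n => (hc n).1, countable_iUnion fun n => (hc n).2⟩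

lemma countable_setOf_forall_mem_list {α : Type*} {s : Set α} (hs : s.Countable) :
    {l : List α | ∀ a ∈ l, a ∈ s}.Countable := by
  have := hs.to_subtype
  rw [← range_list_map_coe]
  exact countable_range _

lemma Monotone.exists_forall_mem_list {α : Type*} {c : ℕ → Set α} (hc : Monotone c)
    {l : List α} (hl : ∀ a ∈ l, a ∈ ⋃ n, c n) : ∃ n, ∀ a ∈ l, a ∈ c n := by
  classical
  obtain ⟨n, hn⟩ := hc.directed_le.exists_mem_subset_of_finset_subset_biUnion
    (s := l.toFinset) (by simpa [subset_def] using hl)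
  exact ⟨n, fun a ha => hn (by simpa using ha)⟩

open Classical in
noncomputable def coverIn (Z : Set (Set Ordinal)) (s : Set Ordinal) : Set Ordinal :=
  if h : ∃ z ∈ Z, s ⊆ z then h.choose else ∅

noncomputable def coverList (Z : Set (Set Ordinal)) (l : List Ordinal) : Set Ordinal :=
  l.foldl (fun s a => coverIn Z (insert a s)) (coverIn Z ∅)

def coverClosed (Z : Set (Set Ordinal)) (W : Set Ordinal) : Set (Set Ordinal) :=
  {x | x ∈ ctble W ∧ ∀ l : List Ordinal, (∀ a ∈ l, a ∈ x) → coverList Z l ∩ W ⊆ x}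

def coverStep (Z : Set (Set Ordinal)) (W s : Set Ordinal) : Set Ordinal :=
  s ∪ ⋃ l ∈ {l : List Ordinal | ∀ a ∈ l, a ∈ s}, coverList Z l ∩ W

section Cover

variable {W W' : Set Ordinal} {Z : Set (Set Ordinal)}

lemma coverIn_spec (hZ : IsClubW W Z) {s : Set Ordinal} (hs : s ∈ ctble W) :
    coverIn Z s ∈ Z ∧ s ⊆ coverIn Z s := by
  have h := hZ.2.1 s hs
  rw [coverIn, dif_pos h]
  exact h.choose_spec

lemma countable_coverIn (hZ : Z ⊆ ctble W) (s : Set Ordinal) : (coverIn Z s).Countable := by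
  unfold coverIn
  split_ifs with h
  · exact (hZ h.choose_spec.1).2
  · exact countable_empty

lemma coverList_append_singleton (l : List Ordinal) (a : Ordinal) :
    coverList Z (l ++ [a]) = coverIn Z (insert a (coverList Z l)) := by
  simp only [coverList, List.foldl_append, List.foldl_cons, List.foldl_nil]

lemma countable_coverList (hZ : Z ⊆ ctble W) (l : List Ordinal) : (coverList Z l).Countable := by
  induction l using List.reverseRecOn with
  | nil => exact countable_coverIn hZ ∅
  | append_singleton l a _ =>
    rw [coverList_append_singleton]
    exact countable_coverIn hZ _

lemma coverList_mem (hZ : IsClubW W Z) {l : List Ordinal} (hl : ∀ a ∈ l, a ∈ W) :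
    coverList Z l ∈ Z := by
  induction l using List.reverseRecOn with
  | nil => exact (coverIn_spec hZ ⟨empty_subset W, countable_empty⟩).1
  | append_singleton l a ih =>
    have hlZ := ih fun b hb => hl b (List.mem_append_left _ hb)
    rw [coverList_append_singleton]
    exact (coverIn_spec hZ (insert_mem_ctble (hl a (by simp)) (hZ.1 hlZ))).1

lemma insert_coverList_subset (hZ : IsClubW W Z) {l : List Ordinal} {a : Ordinal}
    (hl : ∀ b ∈ l, b ∈ W) (ha : a ∈ W) :
    insert a (coverList Z l) ⊆ coverList Z (l ++ [a]) := by
  rw [coverList_append_singleton]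
  exact (coverIn_spec hZ (insert_mem_ctble ha (hZ.1 (coverList_mem hZ hl)))).2

lemma coverStep_mem_ctble (hZ : Z ⊆ ctble W') {s : Set Ordinal} (hs : s ∈ ctble W) :
    coverStep Z W s ∈ ctble W :=
  ⟨union_subset hs.1 (iUnion₂_subset fun _ _ => inter_subset_right),
    hs.2.union <| (countable_setOf_forall_mem_list hs.2).biUnion fun l _ =>
      (countable_coverList hZ l).mono inter_subset_left⟩

lemma isClubW_coverClosed (hZ : IsClubW W' Z) : IsClubW W (coverClosed Z W) := by
  refine ⟨fun x hx => hx.1, fun x hx => ?_, fun c hc hc_succ => ?_⟩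
  · set c : ℕ → Set Ordinal := fun n => (coverStep Z W)^[n] x
    have hc_succ (n : ℕ) : c (n + 1) = coverStep Z W (c n) :=
      Function.iterate_succ_apply' _ n x
    have hc_mono : Monotone c := monotone_nat_of_le_succ fun n => by
      rw [hc_succ]
      exact subset_union_left
    have hc_mem (n : ℕ) : c n ∈ ctble W := by
      induction n with
      | zero => exact hx
      | succ n ih => exact hc_succ n ▸ coverStep_mem_ctble hZ.1 ih
    refine ⟨⋃ n, c n, ⟨iUnion_mem_ctble hc_mem, fun l hl => ?_⟩, subset_iUnion c 0⟩
    obtain ⟨n, hn⟩ := hc_mono.exists_forall_mem_list hl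
    calc coverList Z l ∩ W ⊆ coverStep Z W (c n) :=
          (subset_biUnion_of_mem (u := fun l => coverList Z l ∩ W)
            (show l ∈ {l : List Ordinal | ∀ a ∈ l, a ∈ c n} from hn)).trans subset_union_right
      _ = c (n + 1) := (hc_succ n).symm
      _ ⊆ ⋃ n, c n := subset_iUnion c (n + 1)
  · refine ⟨iUnion_mem_ctble fun n => (hc n).1, fun l hl => ?_⟩
    obtain ⟨n, hn⟩ := (monotone_nat_of_le_succ hc_succ).exists_forall_mem_list hl
    exact ((hc n).2 l hn).trans (subset_iUnion c n)

lemma exists_mem_inter_eq_of_mem_coverClosed (hZ : IsClubW W' Z) (hWW' : W ⊆ W')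
    {x : Set Ordinal} (hx : x ∈ coverClosed Z W) : ∃ z ∈ Z, z ∩ W = x := by
  rcases x.eq_empty_or_nonempty with rfl | hne
  · exact ⟨coverList Z [], coverList_mem hZ (by simp),
      subset_empty_iff.mp (hx.2 [] (by simp))⟩
  obtain ⟨f, rfl⟩ := hx.1.2.exists_eq_range hne
  set l : ℕ → List Ordinal := fun n => (List.range n).map f with hl_def
  have hl_range (n : ℕ) : ∀ a ∈ l n, a ∈ range f := by
    simp only [hl_def, List.mem_map]
    rintro _ ⟨k, -, rfl⟩
    exact mem_range_self k
  have hl_W' (n : ℕ) : ∀ a ∈ l n, a ∈ W' := fun a ha => hWW' (hx.1.1 (hl_range n a ha))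
  have hl_succ (n : ℕ) : l (n + 1) = l n ++ [f n] := by
    simp only [hl_def, List.range_succ, List.map_append, List.map_cons, List.map_nil]
  have hcover (n : ℕ) : insert (f n) (coverList Z (l n)) ⊆ coverList Z (l (n + 1)) :=
    hl_succ n ▸ insert_coverList_subset hZ (hl_W' n) (hWW' (hx.1.1 (mem_range_self n)))
  refine ⟨⋃ n, coverList Z (l n), hZ.2.2 _ (fun n => coverList_mem hZ (hl_W' n))
    (fun n => (subset_insert _ _).trans (hcover n)), Subset.antisymm ?_ ?_⟩
  · rintro a ⟨ha, haW⟩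
    obtain ⟨n, hn⟩ := mem_iUnion.mp ha
    exact hx.2 (l n) (hl_range n) ⟨hn, haW⟩
  · rintro _ ⟨n, rfl⟩
    exact ⟨mem_iUnion.mpr ⟨n + 1, hcover n (mem_insert _ _)⟩, hx.1.1 (mem_range_self n)⟩

end Cover

theorem stmt3_general (W W' : Set Ordinal) (hWW' : W ⊆ W')
    (X : Set (Set Ordinal)) (hstat : IsStat W X) :
    IsStat W' {x' | x' ∈ ctble W' ∧ x' ∩ W ∈ X} := by
  intro Z hZ
  obtain ⟨x, hxX, hxC⟩ := hstat _ (isClubW_coverClosed hZ)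
  obtain ⟨z, hzZ, hzx⟩ := exists_mem_inter_eq_of_mem_coverClosed hZ hWW' hxC
  exact ⟨z, ⟨hZ.1 hzZ, hzx ▸ hxX⟩, hzZ⟩

theorem stmt3 (W W' : Set Ordinal) (hW : Set.Iio omega1 ⊆ W) (hWW' : W ⊆ W')
    (X : Set (Set Ordinal)) (hX : X ⊆ ctble W) (hstat : IsStat W X) :
    IsStat W' {x' | x' ∈ ctble W' ∧ x' ∩ W ∈ X} :=
  stmt3_general W W' hWW' X hstat
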